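/- Let ι_1 : Fin n_1 → Fin m and ι_2 : Fin n_2 → Fin m be injective maps with disjoint ranges, and write Φ_k = Φ_{ι_k}. Let η : sl_m(ℂ) → M_m(ℂ) be a ℂ-linear map (a noncommutative connection 1-form on M_m(ℂ)), and for k = 1, 2 let ω_k : sl_{n_k}(ℂ) → M_{n_k}(ℂ) be ℂ-linear maps with η(Φ_k(E)) = Φ_k(ω_k(E)) for all E ∈ sl_{n_k}(ℂ). Define the curvature of η by Θ(X,Y) := [X, η(Y)] − [Y, η(X)] − η([X,Y]) − [η(X), η(Y)] for X, Y ∈ sl_m(ℂ), and analogously define Θ^{ω_k}(E,E') := [E, ω_k(E')] − [E', ω_k(E)] − ω_k([E,E']) − [ω_k(E), ω_k(E')] on sl_{n_k}(ℂ). Then: (i) Θ(Φ_1(E), Φ_2(E')) = 0 for all E ∈ sl_{n_1}(ℂ) and E' ∈ sl_{n_2}(ℂ); (ii) Θ(Φ_1(E), Φ_1(E')) = Φ_1(Θ^{ω_1}(E,E')) for all E, E' ∈ sl_{n_1}(ℂ). -/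

import Mathlib

/-- The corner embedding `Φ_ι : M_n(ℂ) → M_m(ℂ)` associated to an injective map
`ι : Fin n → Fin m`: the `(ι k, ι l)` entry of `cornerEmb ι a` is `a k l` and all other
entries are `0`. -/
noncomputable def cornerEmb {n m : ℕ} (ι : Fin n → Fin m) (a : Matrix (Fin n) (Fin n) ℂ) :
    Matrix (Fin m) (Fin m) ℂ :=
  ∑ k : Fin n, ∑ l : Fin n, a k l • Matrix.single (ι k) (ι l) 1

/-- The curvature 2-form of a connection 1-form `η`:
`Θ(X,Y) = [X,η(Y)] − [Y,η(X)] − η([X,Y]) − [η(X),η(Y)]`. -/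
noncomputable def curvTwoForm {N : ℕ}
    (η : Matrix (Fin N) (Fin N) ℂ →ₗ[ℂ] Matrix (Fin N) (Fin N) ℂ)
    (X Y : Matrix (Fin N) (Fin N) ℂ) : Matrix (Fin N) (Fin N) ℂ :=
  (X * η Y - η Y * X) - (Y * η X - η X * Y) - η (X * Y - Y * X) -
    (η X * η Y - η Y * η X)

/-!
The corner embedding is the conjugation `a ↦ P a Pᵀ` by the partial permutation matrix `P` with
`P (ι k) k = 1`. Since `Pᵀ P' = 1.submatrix ι ι'`, which is `1` for `ι = ι'` injective and `0`
for disjoint ranges, corner embeddings are multiplicative and corner embeddings with disjoint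
ranges annihilate each other. As `η = Φ_k ∘ ω_k` on the traceless part of `M_{n_k}` and
commutators are traceless, every term of `Θ(Φ₁ E, Φ₁ E')` is `Φ₁` of the corresponding term of
`Θ^{ω₁}(E, E')`, while every term of `Θ(Φ₁ E, Φ₂ E')` is a product of matrices supported in
disjoint corners, or `η` of such a product.
-/

open Matrix

variable {n n' m : ℕ}

noncomputable def cornerIncl (ι : Fin n → Fin m) : Matrix (Fin m) (Fin n) ℂ :=
  (1 : Matrix (Fin m) (Fin m) ℂ).submatrix id ι

theorem cornerEmb_eq_cornerIncl_mul_mul_transpose (ι : Fin n → Fin m)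
    (a : Matrix (Fin n) (Fin n) ℂ) : cornerEmb ι a = cornerIncl ι * a * (cornerIncl ι)ᵀ := by
  ext i j
  simp only [cornerEmb, cornerIncl, transpose_submatrix, transpose_one, mul_apply,
    Matrix.sum_apply, Matrix.smul_apply, single_apply, submatrix_apply, one_apply, id,
    Finset.sum_mul]
  rw [Finset.sum_comm]
  refine Finset.sum_congr rfl fun k _ => Finset.sum_congr rfl fun l _ => ?_
  split_ifs <;> simp_all

theorem transpose_cornerIncl_mul_cornerIncl (ι : Fin n → Fin m) (ι' : Fin n' → Fin m) :
    (cornerIncl ι)ᵀ * cornerIncl ι' = (1 : Matrix (Fin m) (Fin m) ℂ).submatrix ι ι' := by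
  rw [cornerIncl, cornerIncl, transpose_submatrix, transpose_one,
    ← submatrix_mul _ _ _ _ _ Function.bijective_id, Matrix.mul_one]

theorem transpose_cornerIncl_mul_self {ι : Fin n → Fin m} (hι : Function.Injective ι) :
    (cornerIncl ι)ᵀ * cornerIncl ι = 1 := by
  rw [transpose_cornerIncl_mul_cornerIncl, submatrix_one _ hι]

theorem transpose_cornerIncl_mul_cornerIncl_of_disjoint {ι : Fin n → Fin m}
    {ι' : Fin n' → Fin m} (hdisj : Disjoint (Set.range ι) (Set.range ι')) :
    (cornerIncl ι)ᵀ * cornerIncl ι' = 0 := by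
  ext k l
  rw [transpose_cornerIncl_mul_cornerIncl, submatrix_apply, Matrix.zero_apply,
    one_apply_ne (Set.disjoint_iff_forall_ne.mp hdisj ⟨k, rfl⟩ ⟨l, rfl⟩)]

theorem cornerEmb_sub (ι : Fin n → Fin m) (a b : Matrix (Fin n) (Fin n) ℂ) :
    cornerEmb ι (a - b) = cornerEmb ι a - cornerEmb ι b := by
  simp only [cornerEmb_eq_cornerIncl_mul_mul_transpose, Matrix.mul_sub, Matrix.sub_mul]

theorem cornerEmb_mul {ι : Fin n → Fin m} (hι : Function.Injective ι)
    (a b : Matrix (Fin n) (Fin n) ℂ) :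
    cornerEmb ι a * cornerEmb ι b = cornerEmb ι (a * b) := by
  simp only [cornerEmb_eq_cornerIncl_mul_mul_transpose, Matrix.mul_assoc]
  rw [← Matrix.mul_assoc (cornerIncl ι)ᵀ, transpose_cornerIncl_mul_self hι, Matrix.one_mul]

theorem cornerEmb_mul_of_disjoint {ι : Fin n → Fin m} {ι' : Fin n' → Fin m}
    (hdisj : Disjoint (Set.range ι) (Set.range ι'))
    (a : Matrix (Fin n) (Fin n) ℂ) (b : Matrix (Fin n') (Fin n') ℂ) :
    cornerEmb ι a * cornerEmb ι' b = 0 := by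
  simp only [cornerEmb_eq_cornerIncl_mul_mul_transpose, Matrix.mul_assoc]
  rw [← Matrix.mul_assoc (cornerIncl ι)ᵀ, transpose_cornerIncl_mul_cornerIncl_of_disjoint hdisj,
    Matrix.zero_mul, Matrix.mul_zero, Matrix.mul_zero]

theorem trace_mul_sub_mul_eq_zero {R ι : Type*} [CommRing R] [Fintype ι] (a b : Matrix ι ι R) :
    (a * b - b * a).trace = 0 := by
  rw [trace_sub, trace_mul_comm, sub_self]

theorem curvTwoForm_cornerEmb_of_disjoint {ι : Fin n → Fin m} {ι' : Fin n' → Fin m}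
    (hdisj : Disjoint (Set.range ι) (Set.range ι'))
    {η : Matrix (Fin m) (Fin m) ℂ →ₗ[ℂ] Matrix (Fin m) (Fin m) ℂ}
    {E F : Matrix (Fin n) (Fin n) ℂ} {E' F' : Matrix (Fin n') (Fin n') ℂ}
    (hE : η (cornerEmb ι E) = cornerEmb ι F) (hE' : η (cornerEmb ι' E') = cornerEmb ι' F') :
    curvTwoForm η (cornerEmb ι E) (cornerEmb ι' E') = 0 := by
  simp only [curvTwoForm, hE, hE', cornerEmb_mul_of_disjoint hdisj,
    cornerEmb_mul_of_disjoint hdisj.symm, sub_self, map_zero]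

theorem curvTwoForm_cornerEmb {ι : Fin n → Fin m} (hι : Function.Injective ι)
    {η : Matrix (Fin m) (Fin m) ℂ →ₗ[ℂ] Matrix (Fin m) (Fin m) ℂ}
    {ω : Matrix (Fin n) (Fin n) ℂ →ₗ[ℂ] Matrix (Fin n) (Fin n) ℂ}
    {E E' : Matrix (Fin n) (Fin n) ℂ}
    (hE : η (cornerEmb ι E) = cornerEmb ι (ω E))
    (hE' : η (cornerEmb ι E') = cornerEmb ι (ω E'))
    (hEE' : η (cornerEmb ι (E * E' - E' * E)) = cornerEmb ι (ω (E * E' - E' * E))) :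
    curvTwoForm η (cornerEmb ι E) (cornerEmb ι E') = cornerEmb ι (curvTwoForm ω E E') := by
  simp only [curvTwoForm, hE, hE', cornerEmb_mul hι, ← cornerEmb_sub, hEE']

theorem curvature_inherited_components_general {n₁ n₂ m : ℕ}
    (ι₁ : Fin n₁ → Fin m) (ι₂ : Fin n₂ → Fin m)
    (h₁ : Function.Injective ι₁)
    (hdisj : Disjoint (Set.range ι₁) (Set.range ι₂))
    (η : Matrix (Fin m) (Fin m) ℂ →ₗ[ℂ] Matrix (Fin m) (Fin m) ℂ)
    (ω₁ : Matrix (Fin n₁) (Fin n₁) ℂ →ₗ[ℂ] Matrix (Fin n₁) (Fin n₁) ℂ)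
    (ω₂ : Matrix (Fin n₂) (Fin n₂) ℂ →ₗ[ℂ] Matrix (Fin n₂) (Fin n₂) ℂ)
    (hc₁ : ∀ E : Matrix (Fin n₁) (Fin n₁) ℂ, E.trace = 0 →
      η (cornerEmb ι₁ E) = cornerEmb ι₁ (ω₁ E))
    (hc₂ : ∀ E : Matrix (Fin n₂) (Fin n₂) ℂ, E.trace = 0 →
      η (cornerEmb ι₂ E) = cornerEmb ι₂ (ω₂ E)) :
    (∀ (E : Matrix (Fin n₁) (Fin n₁) ℂ) (E' : Matrix (Fin n₂) (Fin n₂) ℂ),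
      E.trace = 0 → E'.trace = 0 →
      curvTwoForm η (cornerEmb ι₁ E) (cornerEmb ι₂ E') = 0) ∧
    (∀ E E' : Matrix (Fin n₁) (Fin n₁) ℂ, E.trace = 0 → E'.trace = 0 →
      curvTwoForm η (cornerEmb ι₁ E) (cornerEmb ι₁ E') =
        cornerEmb ι₁
          ((E * ω₁ E' - ω₁ E' * E) - (E' * ω₁ E - ω₁ E * E') -
            ω₁ (E * E' - E' * E) - (ω₁ E * ω₁ E' - ω₁ E' * ω₁ E))) :=
  ⟨fun E E' hE hE' => curvTwoForm_cornerEmb_of_disjoint hdisj (hc₁ E hE) (hc₂ E' hE'),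
    fun E E' hE hE' => curvTwoForm_cornerEmb h₁ (hc₁ E hE) (hc₁ E' hE')
      (hc₁ _ (trace_mul_sub_mul_eq_zero E E'))⟩

/-- For a connection 1-form `η` on `M_m(ℂ)` that is `φ`-compatible with
connection 1-forms `ω₁, ω₂` through corner embeddings with disjoint ranges, the curvature
of `η` vanishes on derivations inherited from different blocks, and on derivations
inherited from the same block it is the embedding of the curvature of `ω₁`. -/
theorem curvature_inherited_components {n₁ n₂ m : ℕ}
    (ι₁ : Fin n₁ → Fin m) (ι₂ : Fin n₂ → Fin m)
    (h₁ : Function.Injective ι₁) (h₂ : Function.Injective ι₂)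
    (hdisj : Disjoint (Set.range ι₁) (Set.range ι₂))
    (η : Matrix (Fin m) (Fin m) ℂ →ₗ[ℂ] Matrix (Fin m) (Fin m) ℂ)
    (ω₁ : Matrix (Fin n₁) (Fin n₁) ℂ →ₗ[ℂ] Matrix (Fin n₁) (Fin n₁) ℂ)
    (ω₂ : Matrix (Fin n₂) (Fin n₂) ℂ →ₗ[ℂ] Matrix (Fin n₂) (Fin n₂) ℂ)
    (hc₁ : ∀ E : Matrix (Fin n₁) (Fin n₁) ℂ, E.trace = 0 →
      η (cornerEmb ι₁ E) = cornerEmb ι₁ (ω₁ E))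
    (hc₂ : ∀ E : Matrix (Fin n₂) (Fin n₂) ℂ, E.trace = 0 →
      η (cornerEmb ι₂ E) = cornerEmb ι₂ (ω₂ E)) :
    (∀ (E : Matrix (Fin n₁) (Fin n₁) ℂ) (E' : Matrix (Fin n₂) (Fin n₂) ℂ),
      E.trace = 0 → E'.trace = 0 →
      curvTwoForm η (cornerEmb ι₁ E) (cornerEmb ι₂ E') = 0) ∧
    (∀ E E' : Matrix (Fin n₁) (Fin n₁) ℂ, E.trace = 0 → E'.trace = 0 →
      curvTwoForm η (cornerEmb ι₁ E) (cornerEmb ι₁ E') =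
        cornerEmb ι₁
          ((E * ω₁ E' - ω₁ E' * E) - (E' * ω₁ E - ω₁ E * E') -
            ω₁ (E * E' - E' * E) - (ω₁ E * ω₁ E' - ω₁ E' * ω₁ E))) :=
  curvature_inherited_components_general ι₁ ι₂ h₁ hdisj η ω₁ ω₂ hc₁ hc₂
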